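/- The set of Shareshian pairs is preserved by the restricted diagonal monoid action. Precisely, let (w, u*) ∈ S_n × S_n be a Shareshian pair (there exists Δ ⊆ {1,…,n} containing n, decreasing for w^{-1}, with u* = τ_Δ w σ^{-1}). For x ∈ S_n write ℓ*(x) = ℓ(σ^{-1}xσ). Then: (Right action) for every j ∈ {1,…,n−1}, the pair (w', y') is a Shareshian pair, where w' = w s_j if ℓ(w s_j) > ℓ(w) and w' = w otherwise, and y' = u* t_j if ℓ*(u* t_j) > ℓ*(u*) and y' = u* otherwise, with s_j = (j, j+1) and t_j = σ s_j σ^{-1} (the transposition swapping σ(j) and σ(j+1)). (Left action) for every i ∈ {1,…,n−2}, the pair (w'', y'') is a Shareshian pair, where w'' = s_i w if ℓ(s_i w) > ℓ(w) and w'' = w otherwise, and y'' = s_i u* if ℓ*(s_i u*) > ℓ*(u*) and y'' = u* otherwise. -/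

import Mathlib

/-
Common setup.  The ambient space is `ℂ^(n+1)` (so the paper's `n` is our `n + 1`,
and the paper's hypothesis `n ≥ 2` becomes `1 ≤ n`).  Coordinates are indexed by
`Fin (n+1)`, zero-indexed, so the paper's index `i ∈ {1, …, n}` is our `i - 1`,
and the paper's `e_n` is `e (Fin.last n)`.
-/

noncomputable section

namespace ShareshianPairs

/-- The standard basis vector `e i` of `ℂ^(n+1)`. -/
def e (n : ℕ) (i : Fin (n + 1)) : Fin (n + 1) → ℂ := Pi.single i 1

/-- The hat vector `ê j = e j + e n`. -/
def hatE (n : ℕ) (j : Fin (n + 1)) : Fin (n + 1) → ℂ := e n j + e n (Fin.last n)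

/-- The flag `(v 0 ⊂ v 1 ⊂ ⋯)` spanned by a sequence of vectors. -/
def flagOf (n : ℕ) (v : Fin (n + 1) → Fin (n + 1) → ℂ) :
    Fin (n + 1) → Submodule ℂ (Fin (n + 1) → ℂ) :=
  fun i => Submodule.span ℂ (v '' {j | j ≤ i})

/-- A full flag in `ℂ^(n+1)`. -/
def IsFlag (n : ℕ) (V : Fin (n + 1) → Submodule ℂ (Fin (n + 1) → ℂ)) : Prop :=
  Monotone V ∧ ∀ i : Fin (n + 1), Module.finrank ℂ (V i) = (i : ℕ) + 1

/-- The action of `GL(n+1, ℂ)` on flags. -/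
def actFlag (n : ℕ) (g : Matrix.GeneralLinearGroup (Fin (n + 1)) ℂ)
    (V : Fin (n + 1) → Submodule ℂ (Fin (n + 1) → ℂ)) :
    Fin (n + 1) → Submodule ℂ (Fin (n + 1) → ℂ) :=
  fun i => (V i).map (Matrix.mulVecLin (g : Matrix (Fin (n + 1)) (Fin (n + 1)) ℂ))

/-- Membership in the Borel subgroup `B` of invertible upper triangular matrices. -/
def InB (n : ℕ) (g : Matrix.GeneralLinearGroup (Fin (n + 1)) ℂ) : Prop :=
  ∀ i j : Fin (n + 1), j < i → (g : Matrix (Fin (n + 1)) (Fin (n + 1)) ℂ) i j = 0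

/-- Membership in `B_{n-1} ⊂ B` : upper triangular, last diagonal entry `1`,
remaining last-column entries `0`. -/
def InBsmall (n : ℕ) (g : Matrix.GeneralLinearGroup (Fin (n + 1)) ℂ) : Prop :=
  InB n g ∧
    (g : Matrix (Fin (n + 1)) (Fin (n + 1)) ℂ) (Fin.last n) (Fin.last n) = 1 ∧
    ∀ i : Fin (n + 1), i ≠ Fin.last n →
      (g : Matrix (Fin (n + 1)) (Fin (n + 1)) ℂ) i (Fin.last n) = 0

/-- The spanning vectors of the flag `E* = (e_n ⊂ e_1 ⊂ ⋯ ⊂ e_{n-1})`. -/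
def eStarVec (n : ℕ) : Fin (n + 1) → Fin (n + 1) → ℂ :=
  fun i => Fin.cases (e n (Fin.last n)) (fun j => e n j.castSucc) i

/-- Membership in `B*`, the stabilizer of the flag `E*`. -/
def InBstar (n : ℕ) (g : Matrix.GeneralLinearGroup (Fin (n + 1)) ℂ) : Prop :=
  actFlag n g (flagOf n (eStarVec n)) = flagOf n (eStarVec n)

/-- Membership in `H`, the invertible diagonal matrices. -/
def InH (n : ℕ) (g : Matrix.GeneralLinearGroup (Fin (n + 1)) ℂ) : Prop :=
  ∀ i j : Fin (n + 1), i ≠ j → (g : Matrix (Fin (n + 1)) (Fin (n + 1)) ℂ) i j = 0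

/-- The orbit of a flag under the subgroup `{g | P g}`. -/
def orbit (n : ℕ) (P : Matrix.GeneralLinearGroup (Fin (n + 1)) ℂ → Prop)
    (V : Fin (n + 1) → Submodule ℂ (Fin (n + 1) → ℂ)) :
    Set (Fin (n + 1) → Submodule ℂ (Fin (n + 1) → ℂ)) :=
  {W | ∃ g : Matrix.GeneralLinearGroup (Fin (n + 1)) ℂ, P g ∧ W = actFlag n g V}

/-- A sequence of spanning vectors is in standard form. -/
def IsStdForm (n : ℕ) (v : Fin (n + 1) → Fin (n + 1) → ℂ) : Prop :=
  LinearIndependent ℂ v ∧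
  (∀ i, (∃ j, v i = e n j) ∨ (∃ j, j ≠ Fin.last n ∧ v i = hatE n j)) ∧
  (∃ i, v i = e n (Fin.last n)) ∧
  (∀ i k : Fin (n + 1), v i = e n (Fin.last n) → i < k → ∃ j, v k = e n j) ∧
  (∀ i k ji jk : Fin (n + 1), i < k → ji ≠ Fin.last n → jk ≠ Fin.last n →
    v i = hatE n ji → v k = hatE n jk → jk < ji)

/-- `vs` spans the flag `F*` : each hat vector `ê j` of `v` is replaced by `e j`,
all other entries are unchanged. -/
def StarPair (n : ℕ) (v vs : Fin (n + 1) → Fin (n + 1) → ℂ) : Prop :=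
  ∀ q : Fin (n + 1),
    ((∃ t, v q = e n t) → vs q = v q) ∧
    (∀ j : Fin (n + 1), j ≠ Fin.last n → v q = hatE n j → vs q = e n j)

/-- `vt` spans the flag `F̃` attached to the standard-form flag spanned by `v`. -/
def TildePair (n : ℕ) (v vt : Fin (n + 1) → Fin (n + 1) → ℂ) : Prop :=
  ((∀ q, ∃ t, v q = e n t) ∧ vt = v) ∨
  (∃ (k : ℕ) (hk : 0 < k) (i j : Fin k → Fin (n + 1)) (p : Fin (n + 1)),
    StrictAnti i ∧ StrictMono j ∧
    (∀ m : Fin k, j m ≠ Fin.last n ∧ v (i m) = hatE n (j m)) ∧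
    v p = e n (Fin.last n) ∧
    (∀ q : Fin (n + 1), (∀ m : Fin k, q ≠ i m) → ∃ t, v q = e n t) ∧
    vt (i ⟨k - 1, Nat.sub_lt hk Nat.one_pos⟩) = e n (Fin.last n) ∧
    (∀ (m : Fin k) (h : (m : ℕ) + 1 < k), vt (i m) = e n (j ⟨(m : ℕ) + 1, h⟩)) ∧
    vt p = e n (j ⟨0, hk⟩) ∧
    (∀ q : Fin (n + 1), (∀ m : Fin k, q ≠ i m) → q ≠ p → vt q = v q))

/-- The `(n+1)`-cycle `σ`, zero-indexed version of the paper's `σ = (n, n-1, …, 1)`: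
`σ 0 = n` and `σ k = k - 1` for `k ≥ 1`. -/
def sigma (n : ℕ) : Equiv.Perm (Fin (n + 1)) := (finRotate (n + 1))⁻¹

/-- The cycle `τ_Δ = (n, j_k, …, j_2, j_1)` attached to a subset
`Δ = {j_1 < ⋯ < j_k < n} ∪ {n}`:  it sends each element of `Δ` to the next
smaller element (the smallest going back to the largest) and fixes everything else. -/
def tauDelta (n : ℕ) (Δ : Finset (Fin (n + 1))) : Equiv.Perm (Fin (n + 1)) :=
  ((Δ.sort (· ≤ ·)).formPerm)⁻¹

/-- `Δ` is a decreasing sequence for `w⁻¹`. -/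
def IsDecreasingFor (n : ℕ) (Δ : Finset (Fin (n + 1)))
    (w : Equiv.Perm (Fin (n + 1))) : Prop :=
  ∀ x ∈ Δ, ∀ y ∈ Δ, x < y → w⁻¹ y < w⁻¹ x

/-- The spanning vectors of the flag `y(E*)`. -/
def eStarPermVec (n : ℕ) (y : Equiv.Perm (Fin (n + 1))) :
    Fin (n + 1) → Fin (n + 1) → ℂ :=
  fun i => Fin.cases (e n (y (Fin.last n))) (fun t => e n (y t.castSucc)) i

/-- Coxeter length = number of inversions. -/
def len (n : ℕ) (w : Equiv.Perm (Fin (n + 1))) : ℕ :=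
  (Finset.univ.filter
    (fun p : Fin (n + 1) × Fin (n + 1) => p.1 < p.2 ∧ w p.2 < w p.1)).card

/-- Length with respect to the set of simple reflections `S*`. -/
def lenStar (n : ℕ) (x : Equiv.Perm (Fin (n + 1))) : ℕ :=
  len n ((sigma n)⁻¹ * x * sigma n)

/-- Bruhat order on the symmetric group (tableau criterion):
`y ≤ w` iff `#{i ≤ p : y i ≤ q} ≥ #{i ≤ p : w i ≤ q}` for all `p, q`. -/
def bruhatLE (n : ℕ) (y w : Equiv.Perm (Fin (n + 1))) : Prop :=
  ∀ p q : Fin (n + 1),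
    (Finset.univ.filter (fun i => i ≤ p ∧ w i ≤ q)).card ≤
      (Finset.univ.filter (fun i => i ≤ p ∧ y i ≤ q)).card

/-- The total order `n ≺ 1 ≺ 2 ≺ ⋯ ≺ n - 1` (zero-indexed). -/
def precOrd (n : ℕ) (a b : Fin (n + 1)) : Prop :=
  finRotate (n + 1) a < finRotate (n + 1) b

/-- `(w, u*)` is a Shareshian pair. -/
def IsShPair (n : ℕ) (w u : Equiv.Perm (Fin (n + 1))) : Prop :=
  ∃ Δ : Finset (Fin (n + 1)), Fin.last n ∈ Δ ∧ IsDecreasingFor n Δ w ∧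
    u = tauDelta n Δ * w * (sigma n)⁻¹

/-- The matrix whose `i`-th column is `v i`. -/
def colMat (n : ℕ) (v : Fin (n + 1) → Fin (n + 1) → ℂ) :
    Matrix (Fin (n + 1)) (Fin (n + 1)) ℂ :=
  Matrix.of fun r c => v c r

/-- The double coset `{b₁ * g * b₂ | P b₁, Q b₂}` as a set of matrices. -/
def dblCoset (n : ℕ) (P Q : Matrix.GeneralLinearGroup (Fin (n + 1)) ℂ → Prop)
    (g : Matrix (Fin (n + 1)) (Fin (n + 1)) ℂ) :
    Set (Matrix (Fin (n + 1)) (Fin (n + 1)) ℂ) :=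
  {x | ∃ b₁ b₂ : Matrix.GeneralLinearGroup (Fin (n + 1)) ℂ, P b₁ ∧ Q b₂ ∧
    x = (b₁ : Matrix (Fin (n + 1)) (Fin (n + 1)) ℂ) * g *
      (b₂ : Matrix (Fin (n + 1)) (Fin (n + 1)) ℂ)}

/-- The coordinate subspace `E_q = span {e_1, …, e_q}`. -/
def Esub (n : ℕ) (q : ℕ) : Submodule ℂ (Fin (n + 1) → ℂ) :=
  Submodule.span ℂ (e n '' {t : Fin (n + 1) | (t : ℕ) < q})

/-- The line `L = ℂ e_n`. -/
def Lline (n : ℕ) : Submodule ℂ (Fin (n + 1) → ℂ) :=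
  Submodule.span ℂ {e n (Fin.last n)}

/-
Write a Shareshian pair as `u* = τ_Δ w σ⁻¹`. Each length condition of the statement compares
two adjacent values: `ℓ(w s_j) > ℓ(w)` iff `w j < w (j+1)`, and `ℓ*` compares values of `u*` in
the rotated order `precOrd`.

When `w` grows, `Δ` cannot contain both letters exchanged by the swap, so the swap is monotone
on `Δ`; then `Δ` itself (right action) or `s_i Δ` (left action, as `s_i τ_Δ s_i = τ_{s_i Δ}`)
serves for the pair in which both coordinates moved. When only `u*` grows, the condition forces
`Δ` to contain exactly one letter `b` of the relevant pair `{a, b}`, with no element of `Δ`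
between them, and inserting `a` gives `τ_{Δ ∪ {a}} = τ_Δ (a b)`. All moves are involutions, so
the case where only `w` grows follows by moving both coordinates and then moving `u*` back.
-/

theorem _root_.Function.Involutive.ite_ite_of_both_of_snd {α β : Type*} {P : α → β → Prop}
    {f : α → α} {g : β → β} (hg : Function.Involutive g) {p : α → Prop} {q : β → Prop}
    (hp : ∀ a, p a → ¬p (f a)) (hq : ∀ b, ¬q b → q (g b))
    (both : ∀ a b, P a b → p a → P (f a) (g b))
    (snd : ∀ a b, P a b → ¬p a → q b → P a (g b))
    {a : α} {b : β} [Decidable (p a)] [Decidable (q b)] (h : P a b) :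
    P (if p a then f a else a) (if q b then g b else b) := by
  by_cases ha : p a <;> by_cases hb : q b <;> simp only [ha, hb, if_true, if_false]
  · exact both a b h ha
  · simpa only [hg b] using snd _ _ (both a b h ha) (hp a ha) (hq b hb)
  · exact snd a b h ha hb
  · exact h

theorem _root_.Equiv.Perm.eq_of_apply_eq_of_ne {α : Type*} {π ρ : Equiv.Perm α} (a : α)
    (h : ∀ x, x ≠ a → π x = ρ x) : π = ρ := by
  ext x
  by_cases hx : x = a
  · subst hx
    by_contra hne
    have hy : ρ⁻¹ (π x) ≠ x := fun hy => hne (Equiv.Perm.inv_eq_iff_eq.1 hy)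
    exact hy (π.injective (by rw [h _ hy]; simp))
  · exact h x hx

theorem _root_.List.formPerm_map_perm {α : Type*} [DecidableEq α] (g : Equiv.Perm α) :
    ∀ l : List α, (l.map g).formPerm = g * l.formPerm * g⁻¹
  | [] => by simp
  | [x] => by simp
  | x :: y :: l => by
    rw [List.map_cons, List.map_cons, List.formPerm_cons_cons, ← List.map_cons,
      List.formPerm_map_perm g (y :: l), List.formPerm_cons_cons, Equiv.swap_apply_apply]
    group

theorem _root_.CovBy.swap_lt_swap {α : Type*} [LinearOrder α] {a b x y : α} (hab : a ⋖ b)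
    (hxy : x < y) (hne : (x, y) ≠ (a, b)) : Equiv.swap a b x < Equiv.swap a b y := by
  rcases eq_or_ne x a with rfl | hxa
  · rcases eq_or_ne y b with rfl | hyb
    · exact absurd rfl hne
    · rw [Equiv.swap_apply_left, Equiv.swap_apply_of_ne_of_ne hxy.ne' hyb]
      exact (hab.ge_of_gt hxy).lt_of_ne hyb.symm
  rcases eq_or_ne x b with rfl | hxb
  · rw [Equiv.swap_apply_right, Equiv.swap_apply_of_ne_of_ne (hab.lt.trans hxy).ne' hxy.ne']
    exact hab.lt.trans hxy
  rw [Equiv.swap_apply_of_ne_of_ne hxa hxb]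
  rcases eq_or_ne y a with rfl | hya
  · rw [Equiv.swap_apply_left]; exact hxy.trans hab.lt
  rcases eq_or_ne y b with rfl | hyb
  · rw [Equiv.swap_apply_right]; exact (hab.le_of_lt hxy).lt_of_ne hxa
  rwa [Equiv.swap_apply_of_ne_of_ne hya hyb]

theorem _root_.CovBy.swap_lt_swap_and_ne {α : Type*} [LinearOrder α] {a b x y : α}
    (hab : a ⋖ b) (h : x < y ∧ (x, y) ≠ (a, b)) :
    Equiv.swap a b x < Equiv.swap a b y ∧ (Equiv.swap a b x, Equiv.swap a b y) ≠ (a, b) := by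
  refine ⟨hab.swap_lt_swap h.1 h.2, fun he => ?_⟩
  simp only [Prod.mk.injEq, Equiv.swap_apply_eq_iff, Equiv.swap_apply_left,
    Equiv.swap_apply_right] at he
  exact (he.1 ▸ he.2 ▸ h.1).not_gt hab.lt

theorem _root_.CovBy.strictMonoOn_swap {α : Type*} [LinearOrder α] {a b : α} (hab : a ⋖ b)
    {s : Set α} (hs : ¬(a ∈ s ∧ b ∈ s)) : StrictMonoOn (Equiv.swap a b) s :=
  fun _ _ _ _ hxy => hab.swap_lt_swap hxy fun h => hs (by simp_all)

theorem _root_.Fin.covBy_add_one {n : ℕ} {j : Fin (n + 1)} (hj : j < Fin.last n) : j ⋖ j + 1 :=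
  ⟨Fin.lt_add_one_iff.2 hj, fun _ h1 h2 => (Fin.add_one_le_of_lt h1).not_gt h2⟩

section TauDelta

variable {n : ℕ} {Δ : Finset (Fin (n + 1))}

theorem tauDelta_apply_of_notMem {x : Fin (n + 1)} (hx : x ∉ Δ) : tauDelta n Δ x = x := by
  rw [tauDelta, Equiv.Perm.inv_eq_iff_eq]
  exact (List.formPerm_apply_of_notMem (by simpa using hx)).symm

theorem isGreatest_tauDelta_apply {x z : Fin (n + 1)} (hx : x ∈ Δ) (hz : z ∈ Δ)
    (hzx : z < x) :
    IsGreatest (↑Δ ∩ Set.Iio x) (tauDelta n Δ x) := by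
  have hl : (Δ.sort (· ≤ ·)).SortedLT := Finset.sortedLT_sort Δ
  obtain ⟨k, hk, rfl⟩ := List.getElem_of_mem ((Finset.mem_sort (· ≤ ·)).2 hx)
  obtain ⟨m, hm, rfl⟩ := List.getElem_of_mem ((Finset.mem_sort (· ≤ ·)).2 hz)
  have hmk : m < k := hl.getElem_lt_getElem_iff.1 hzx
  have hτ : tauDelta n Δ (Δ.sort (· ≤ ·))[k] = (Δ.sort (· ≤ ·))[k - 1] := by
    rw [tauDelta, Equiv.Perm.inv_eq_iff_eq,
      List.formPerm_apply_getElem _ (Finset.sort_nodup _ _)]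
    have hk' : k < Δ.card := by simpa using hk
    simp [Nat.sub_add_cancel (by omega : 1 ≤ k), Nat.mod_eq_of_lt hk']
  rw [hτ]
  refine ⟨⟨(Finset.mem_sort (· ≤ ·)).1 (List.getElem_mem _),
    hl.getElem_lt_getElem_iff.2 (by omega)⟩, ?_⟩
  rintro y ⟨hy, hyx⟩
  obtain ⟨i, hi, rfl⟩ := List.getElem_of_mem ((Finset.mem_sort (· ≤ ·)).2 hy)
  have := hl.getElem_lt_getElem_iff.1 hyx
  exact hl.getElem_le_getElem_iff.2 (by omega)

theorem tauDelta_min' (h : Δ.Nonempty) : tauDelta n Δ (Δ.min' h) = Δ.max' h := by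
  rw [tauDelta, Equiv.Perm.inv_eq_iff_eq, Finset.min'_eq_sorted_zero,
    Finset.max'_eq_sorted_last, List.formPerm_apply_getElem _ (Finset.sort_nodup _ _)]
  simp [Nat.sub_add_cancel (Finset.card_pos.mpr h)]

theorem tauDelta_apply_of_forall_le {x : Fin (n + 1)} (hx : x ∈ Δ)
    (hmin : ∀ z ∈ Δ, x ≤ z) :
    tauDelta n Δ x = Δ.max' ⟨x, hx⟩ := by
  rw [← tauDelta_min' ⟨x, hx⟩, le_antisymm (Δ.min'_le x hx) (Δ.le_min' _ _ hmin)]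

theorem tauDelta_apply_eq {x y : Fin (n + 1)} (hx : x ∈ Δ) (hy : y ∈ Δ) (hxy : x < y)
    (hgap : ∀ z ∈ Δ, z < y → z ≤ x) : tauDelta n Δ y = x := by
  obtain ⟨⟨hmem, hlt⟩, hub⟩ := isGreatest_tauDelta_apply hy hx hxy
  exact le_antisymm (hgap _ hmem hlt) (hub ⟨hx, hxy⟩)

theorem isLeast_tauDelta_inv_apply {x z : Fin (n + 1)} (hx : x ∈ Δ) (hz : z ∈ Δ)
    (hxz : x < z) :
    IsLeast (↑Δ ∩ Set.Ioi x) ((tauDelta n Δ)⁻¹ x) := by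
  set y := (tauDelta n Δ)⁻¹ x
  have hτy : tauDelta n Δ y = x := by simp [y]
  have hy : y ∈ Δ := by
    by_contra hy
    rw [tauDelta_apply_of_notMem hy] at hτy
    exact hy (hτy ▸ hx)
  by_cases hmin : ∀ z ∈ Δ, y ≤ z
  · have hmax := tauDelta_apply_of_forall_le hy hmin
    rw [hτy] at hmax
    exact absurd (hmax ▸ Δ.le_max' z hz) (not_le.2 hxz)
  push Not at hmin
  obtain ⟨z', hz', hz'y⟩ := hmin
  obtain ⟨⟨-, hxy⟩, hub⟩ := hτy ▸ isGreatest_tauDelta_apply hy hz' hz'y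
  exact ⟨⟨hy, hxy⟩, fun v ⟨hv, hxv⟩ => not_lt.1 fun hvy => (hub ⟨hv, hvy⟩).not_gt hxv⟩

theorem eq_tauDelta_of {π : Equiv.Perm (Fin (n + 1))} (hoff : ∀ x ∉ Δ, π x = x)
    (hadj : ∀ x ∈ Δ, ∀ y ∈ Δ, x < y → (∀ z ∈ Δ, z < y → z ≤ x) → π y = x) :
    π = tauDelta n Δ := by
  rcases Δ.eq_empty_or_nonempty with rfl | hne
  · ext x
    rw [hoff x (Finset.notMem_empty x), tauDelta_apply_of_notMem (Finset.notMem_empty x)]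
  refine Equiv.Perm.eq_of_apply_eq_of_ne (Δ.min' hne) fun y hy => ?_
  by_cases hyΔ : y ∈ Δ
  · obtain ⟨⟨hmem, hlt⟩, hub⟩ :=
      isGreatest_tauDelta_apply hyΔ (Δ.min'_mem hne) ((Δ.min'_le y hyΔ).lt_of_ne' hy)
    exact hadj _ hmem y hyΔ hlt fun z hz hzy => hub ⟨hz, hzy⟩
  · rw [hoff y hyΔ, tauDelta_apply_of_notMem hyΔ]

theorem tauDelta_insert {a b : Fin (n + 1)} (hb : b ∈ Δ) (hab : a < b)
    (hgap : ∀ z ∈ Δ, z < b → z < a) :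
    tauDelta n (insert a Δ) = tauDelta n Δ * Equiv.swap a b := by
  have ha : a ∉ Δ := fun h => (hgap a h hab).false
  refine (eq_tauDelta_of (fun x hx => ?_) fun x hx y hy hxy hadj => ?_).symm
  · rw [Finset.mem_insert, not_or] at hx
    rw [Equiv.Perm.mul_apply,
      Equiv.swap_apply_of_ne_of_ne hx.1 (ne_of_mem_of_not_mem hb hx.2).symm,
      tauDelta_apply_of_notMem hx.2]
  rw [Equiv.Perm.mul_apply]
  rcases Finset.mem_insert.1 hy with rfl | hyΔ
  · have hxΔ : x ∈ Δ := (Finset.mem_insert.1 hx).resolve_left hxy.ne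
    obtain ⟨⟨hmem, hlt⟩, hub⟩ := isGreatest_tauDelta_apply hb hxΔ (hxy.trans hab)
    rw [Equiv.swap_apply_left]
    exact le_antisymm (hadj _ (Finset.mem_insert_of_mem hmem) (hgap _ hmem hlt))
      (hub ⟨hxΔ, hxy.trans hab⟩)
  rcases eq_or_ne y b with rfl | hyb
  · rw [Equiv.swap_apply_right, tauDelta_apply_of_notMem ha]
    rcases Finset.mem_insert.1 hx with rfl | hxΔ
    · rfl
    · exact absurd (hadj a (Finset.mem_insert_self a Δ) hab) (not_le.2 (hgap x hxΔ hxy))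
  rw [Equiv.swap_apply_of_ne_of_ne (ne_of_mem_of_not_mem hyΔ ha) hyb]
  rcases Finset.mem_insert.1 hx with rfl | hxΔ
  · have hby : b < y := (lt_or_gt_of_ne hyb).resolve_left fun h => (hgap y hyΔ h).not_gt hxy
    exact absurd (hadj b (Finset.mem_insert_of_mem hb) hby) (not_le.2 hab)
  · exact tauDelta_apply_eq hxΔ hyΔ hxy fun z hz => hadj z (Finset.mem_insert_of_mem hz)

theorem tauDelta_apply_le_of_ne_last {x : Fin (n + 1)} (hlast : Fin.last n ∈ Δ)
    (h : tauDelta n Δ x ≠ Fin.last n) : tauDelta n Δ x ≤ x := by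
  by_cases hx : x ∈ Δ
  · by_cases hmin : ∀ z ∈ Δ, x ≤ z
    · exact absurd ((tauDelta_apply_of_forall_le hx hmin).trans
        (le_antisymm (Fin.le_last _) (Δ.le_max' _ hlast))) h
    push Not at hmin
    obtain ⟨z, hz, hzx⟩ := hmin
    exact (isGreatest_tauDelta_apply hx hz hzx).1.2.le
  · exact (tauDelta_apply_of_notMem hx).le

theorem tauDelta_map {g : Equiv.Perm (Fin (n + 1))} (hg : StrictMonoOn g Δ) :
    tauDelta n (Δ.map g.toEmbedding) = g * tauDelta n Δ * g⁻¹ := by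
  rw [tauDelta, tauDelta, ← StrictMonoOn.map_finsetSort g.toEmbedding Δ hg]
  rw [Equiv.coe_toEmbedding, List.formPerm_map_perm]
  group

end TauDelta

section Length

variable {n : ℕ}

def inversions (w : Equiv.Perm (Fin (n + 1))) : Finset (Fin (n + 1) × Fin (n + 1)) :=
  Finset.univ.filter fun p => p.1 < p.2 ∧ w p.2 < w p.1

@[simp]
theorem mem_inversions {w : Equiv.Perm (Fin (n + 1))} {p : Fin (n + 1) × Fin (n + 1)} :
    p ∈ inversions w ↔ p.1 < p.2 ∧ w p.2 < w p.1 := by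
  simp [inversions]

theorem len_eq_card_inversions (w : Equiv.Perm (Fin (n + 1))) :
    len n w = (inversions w).card := rfl

theorem inversions_mul_swap_erase {j : Fin (n + 1)} (hj : j < Fin.last n)
    (w : Equiv.Perm (Fin (n + 1))) :
    (inversions (w * Equiv.swap j (j + 1))).erase (j, j + 1) =
      ((inversions w).erase (j, j + 1)).map
        (Equiv.prodCongr (Equiv.swap j (j + 1)) (Equiv.swap j (j + 1))).toEmbedding := by
  have hcov := Fin.covBy_add_one hj
  ext ⟨p, q⟩
  simp only [Finset.mem_map_equiv, Finset.mem_erase, mem_inversions, Equiv.prodCongr_symm,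
    Equiv.symm_swap, Equiv.prodCongr_apply, Prod.map, Equiv.Perm.mul_apply]
  constructor
  · rintro ⟨hne, hlt, hw⟩
    have := hcov.swap_lt_swap_and_ne ⟨hlt, hne⟩
    exact ⟨this.2, this.1, hw⟩
  · rintro ⟨hne, hlt, hw⟩
    have := hcov.swap_lt_swap_and_ne ⟨hlt, hne⟩
    simp only [Equiv.swap_apply_self] at this
    exact ⟨this.2, this.1, hw⟩

theorem len_lt_mul_swap_iff {j : Fin (n + 1)} (hj : j < Fin.last n)
    (w : Equiv.Perm (Fin (n + 1))) :
    len n w < len n (w * Equiv.swap j (j + 1)) ↔ w j < w (j + 1) := by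
  have hjj : j < j + 1 := Fin.lt_add_one_iff.2 hj
  have hcard : ∀ v : Equiv.Perm (Fin (n + 1)), len n v =
      ((inversions v).erase (j, j + 1)).card + if v (j + 1) < v j then 1 else 0 := by
    intro v
    have hmem : (j, j + 1) ∈ inversions v ↔ v (j + 1) < v j := by simp [hjj]
    split_ifs with h
    · exact (Finset.card_erase_add_one (hmem.2 h)).symm
    · rw [Finset.erase_eq_of_notMem (mt hmem.1 h), len_eq_card_inversions, add_zero]
  have hne : w j ≠ w (j + 1) := w.injective.ne hjj.ne
  rw [hcard w, hcard (w * _), inversions_mul_swap_erase hj, Finset.card_map]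
  simp only [Equiv.Perm.mul_apply, Equiv.swap_apply_left, Equiv.swap_apply_right]
  rcases hne.lt_or_gt with h | h <;> simp [h, h.not_gt]

theorem len_inv (w : Equiv.Perm (Fin (n + 1))) : len n w⁻¹ = len n w := by
  apply Finset.card_nbij' (fun p => (w⁻¹ p.2, w⁻¹ p.1)) (fun p => (w p.2, w p.1)) <;>
    intro p <;> simp +contextual

theorem len_lt_swap_mul_iff {j : Fin (n + 1)} (hj : j < Fin.last n)
    (w : Equiv.Perm (Fin (n + 1))) :
    len n w < len n (Equiv.swap j (j + 1) * w) ↔ w⁻¹ j < w⁻¹ (j + 1) := by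
  rw [← len_inv w, ← len_inv (_ * w), mul_inv_rev, Equiv.swap_inv, len_lt_mul_swap_iff hj]

theorem sigma_inv_apply (x : Fin (n + 1)) : (sigma n)⁻¹ x = x + 1 := by
  simp [sigma, finRotate_apply]

theorem sigma_apply_add_one (x : Fin (n + 1)) : sigma n (x + 1) = x := by
  rw [← sigma_inv_apply]
  simp

theorem precOrd_iff_sigma_inv {a b : Fin (n + 1)} :
    precOrd n a b ↔ (sigma n)⁻¹ a < (sigma n)⁻¹ b := by
  simp [precOrd, sigma]

theorem lenStar_lt_mul_conj_swap_iff {j : Fin (n + 1)} (hj : j < Fin.last n)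
    (u : Equiv.Perm (Fin (n + 1))) :
    lenStar n u < lenStar n (u * (sigma n * Equiv.swap j (j + 1) * (sigma n)⁻¹)) ↔
      precOrd n (u (sigma n j)) (u (sigma n (j + 1))) := by
  have h : (sigma n)⁻¹ * (u * (sigma n * Equiv.swap j (j + 1) * (sigma n)⁻¹)) * sigma n =
      (sigma n)⁻¹ * u * sigma n * Equiv.swap j (j + 1) := by group
  rw [lenStar, lenStar, h, len_lt_mul_swap_iff hj, precOrd_iff_sigma_inv]
  rfl

theorem lenStar_lt_swap_mul_iff {i : Fin (n + 1)} (hi : i + 1 < Fin.last n)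
    (u : Equiv.Perm (Fin (n + 1))) :
    lenStar n u < lenStar n (Equiv.swap i (i + 1) * u) ↔
      precOrd n (u⁻¹ i) (u⁻¹ (i + 1)) := by
  have h : (sigma n)⁻¹ * (Equiv.swap i (i + 1) * u) * sigma n =
      Equiv.swap (i + 1) (i + 1 + 1) * ((sigma n)⁻¹ * u * sigma n) := by
    rw [← sigma_inv_apply, ← sigma_inv_apply, Equiv.swap_apply_apply, inv_inv]
    group
  rw [lenStar, lenStar, h, len_lt_swap_mul_iff hi, precOrd_iff_sigma_inv]
  simp [mul_inv_rev, sigma_apply_add_one]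

theorem precOrd_of_not_precOrd {a b : Fin (n + 1)} (hab : a ≠ b) (h : ¬precOrd n a b) :
    precOrd n b a :=
  (not_lt.1 h).lt_of_ne ((finRotate (n + 1)).injective.ne hab.symm)

theorem precOrd_iff {a b : Fin (n + 1)} :
    precOrd n a b ↔ b ≠ Fin.last n ∧ (a = Fin.last n ∨ a < b) := by
  rw [precOrd_iff_sigma_inv, sigma_inv_apply, sigma_inv_apply]
  rcases Fin.eq_castSucc_or_eq_last a with ⟨a, rfl⟩ | rfl <;>
    rcases Fin.eq_castSucc_or_eq_last b with ⟨b, rfl⟩ | rfl <;> simp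

end Length

section Pairs

variable {n : ℕ} {Δ : Finset (Fin (n + 1))} {w u : Equiv.Perm (Fin (n + 1))}

theorem mem_and_forall_lt_of_precOrd_tauDelta (hlast : Fin.last n ∈ Δ) {a b : Fin (n + 1)}
    (hba : b < a) (h : precOrd n (tauDelta n Δ a) (tauDelta n Δ b)) :
    a ∈ Δ ∧ ∀ z ∈ Δ, z < a → z < b := by
  obtain ⟨hb, hab⟩ := precOrd_iff.1 h
  have hτb := tauDelta_apply_le_of_ne_last hlast hb
  have ha : a ∈ Δ := by
    by_contra ha
    rw [tauDelta_apply_of_notMem ha] at hab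
    rcases hab with rfl | hab
    · exact ha hlast
    · exact (hab.trans_le hτb).not_gt hba
  refine ⟨ha, fun z hz hza => ?_⟩
  obtain ⟨⟨-, hτa⟩, hub⟩ := isGreatest_tauDelta_apply ha hz hza
  rcases hab with hτa_last | hab
  · exact absurd (Fin.le_last a) (not_le.2 (hτa_last ▸ hτa))
  · exact (hub ⟨hz, hza⟩).trans_lt (hab.trans_le hτb)

theorem IsDecreasingFor.map {g : Equiv.Perm (Fin (n + 1))} (hg : StrictMonoOn g Δ)
    (h : IsDecreasingFor n Δ w) : IsDecreasingFor n (Δ.map g.toEmbedding) (g * w) := by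
  intro x hx y hy hxy
  rw [Finset.mem_map_equiv] at hx hy
  have : g.symm x < g.symm y := (hg.lt_iff_lt hx hy).1 (by simpa using hxy)
  simpa [mul_inv_rev] using h _ hx _ hy this

theorem IsDecreasingFor.apply_tauDelta_inv_lt (h : IsDecreasingFor n Δ w)
    (hlast : Fin.last n ∈ Δ) {x : Fin (n + 1)} (hx : x ∈ Δ) (hxl : x < Fin.last n) :
    w⁻¹ ((tauDelta n Δ)⁻¹ x) < w⁻¹ x := by
  obtain ⟨⟨hmem, hlt⟩, -⟩ := isLeast_tauDelta_inv_apply hx hlast hxl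
  exact h x hx _ hmem hlt

theorem isShPair_tauDelta_mul_swap (hlast : Fin.last n ∈ Δ) (hdec : IsDecreasingFor n Δ w)
    {a b : Fin (n + 1)} (hb : b ∈ Δ) (hab : a < b) (hgap : ∀ z ∈ Δ, z < b → z < a)
    (hlt : ∀ z ∈ Δ, z < a → w⁻¹ a < w⁻¹ z) (hgt : w⁻¹ b < w⁻¹ a) :
    IsShPair n w (tauDelta n Δ * Equiv.swap a b * w * (sigma n)⁻¹) := by
  refine ⟨insert a Δ, Finset.mem_insert_of_mem hlast, ?_, by rw [tauDelta_insert hb hab hgap]⟩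
  show StrictAntiOn _ _
  rw [Finset.coe_insert, strictAntiOn_insert_iff]
  refine ⟨hlt, fun z hz haz => ?_, hdec⟩
  rcases eq_or_ne z b with rfl | hzb
  · exact hgt
  · have hbz : b < z := (lt_or_gt_of_ne hzb).resolve_left fun h => (hgap z hz h).not_gt haz
    exact (hdec b hb z hz hbz).trans hgt

theorem IsShPair.rightMul_both {j : Fin (n + 1)} (h : IsShPair n w u) (hj : j < Fin.last n)
    (hw : w j < w (j + 1)) :
    IsShPair n (w * Equiv.swap j (j + 1))
      (u * (sigma n * Equiv.swap j (j + 1) * (sigma n)⁻¹)) := by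
  obtain ⟨Δ, hlast, hdec, rfl⟩ := h
  refine ⟨Δ, hlast, fun x hx y hy hxy => ?_, by group⟩
  rw [mul_inv_rev, Equiv.swap_inv, Equiv.Perm.mul_apply, Equiv.Perm.mul_apply]
  refine (Fin.covBy_add_one hj).swap_lt_swap (hdec x hx y hy hxy) fun he => ?_
  simp only [Prod.mk.injEq, Equiv.Perm.inv_eq_iff_eq] at he
  exact (he.1 ▸ he.2 ▸ hxy).not_gt hw

theorem IsShPair.rightMul_snd {j : Fin (n + 1)} (h : IsShPair n w u) (hj : j < Fin.last n)
    (hw : w (j + 1) < w j) (hu : precOrd n (u (sigma n j)) (u (sigma n (j + 1)))) :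
    IsShPair n w (u * (sigma n * Equiv.swap j (j + 1) * (sigma n)⁻¹)) := by
  obtain ⟨Δ, hlast, hdec, rfl⟩ := h
  obtain ⟨ha, hgap⟩ := mem_and_forall_lt_of_precOrd_tauDelta hlast hw (by simpa using hu)
  have hcov := Fin.covBy_add_one hj
  have heq :
      tauDelta n Δ * w * (sigma n)⁻¹ * (sigma n * Equiv.swap j (j + 1) * (sigma n)⁻¹) =
      tauDelta n Δ * Equiv.swap (w (j + 1)) (w j) * w * (sigma n)⁻¹ := by
    rw [Equiv.swap_comm, Equiv.swap_apply_apply]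
    group
  rw [heq]
  refine isShPair_tauDelta_mul_swap hlast hdec ha hw hgap (fun z hz hzb => ?_)
    (by simpa using hcov.lt)
  have hjz : j < w⁻¹ z := by simpa using hdec z hz (w j) ha (hzb.trans hw)
  have hz : j + 1 < w⁻¹ z := (hcov.ge_of_gt hjz).lt_of_ne fun he =>
    hzb.ne (Equiv.Perm.inv_eq_iff_eq.1 he.symm)
  simpa using hz

theorem IsShPair.leftMul_both {i : Fin (n + 1)} (h : IsShPair n w u) (hi0 : i < Fin.last n)
    (hi1 : i + 1 < Fin.last n) (hw : w⁻¹ i < w⁻¹ (i + 1)) :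
    IsShPair n (Equiv.swap i (i + 1) * w) (Equiv.swap i (i + 1) * u) := by
  obtain ⟨Δ, hlast, hdec, rfl⟩ := h
  have hmono : StrictMonoOn (Equiv.swap i (i + 1)) Δ :=
    (Fin.covBy_add_one hi0).strictMonoOn_swap fun ⟨h1, h2⟩ =>
      (hdec i h1 (i + 1) h2 (Fin.lt_add_one_iff.2 hi0)).not_gt hw
  refine ⟨Δ.map (Equiv.swap i (i + 1)).toEmbedding, ?_, hdec.map hmono, ?_⟩
  · rwa [Finset.mem_map_equiv, Equiv.symm_swap, Equiv.swap_apply_of_ne_of_ne hi0.ne' hi1.ne']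
  · rw [tauDelta_map hmono]
    group

theorem IsShPair.leftMul_snd {i : Fin (n + 1)} (h : IsShPair n w u) (hi0 : i < Fin.last n)
    (hi1 : i + 1 < Fin.last n) (hw : w⁻¹ (i + 1) < w⁻¹ i)
    (hu : precOrd n (u⁻¹ i) (u⁻¹ (i + 1))) :
    IsShPair n w (Equiv.swap i (i + 1) * u) := by
  obtain ⟨Δ, hlast, hdec, rfl⟩ := h
  have hcov := Fin.covBy_add_one hi0
  set τ := tauDelta n Δ
  have hu' : w⁻¹ (τ⁻¹ i) < w⁻¹ (τ⁻¹ (i + 1)) := by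
    simpa [precOrd_iff_sigma_inv, mul_inv_rev] using hu
  have hτ_inv : ∀ x ∉ Δ, τ⁻¹ x = x := fun x hx => by
    rw [Equiv.Perm.inv_eq_iff_eq, tauDelta_apply_of_notMem hx]
  have hi1Δ : i + 1 ∉ Δ := by
    intro hi1Δ
    have hle : w⁻¹ (i + 1) ≤ w⁻¹ (τ⁻¹ i) := by
      by_cases hiΔ : i ∈ Δ
      · rw [(Equiv.Perm.inv_eq_iff_eq.2
          (tauDelta_apply_eq hiΔ hi1Δ hcov.lt fun z _ => hcov.le_of_lt).symm)]
      · rw [hτ_inv i hiΔ]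
        exact hw.le
    exact (hu'.trans (hdec.apply_tauDelta_inv_lt hlast hi1Δ hi1)).not_ge hle
  rw [hτ_inv _ hi1Δ] at hu'
  have hiΔ : i ∈ Δ := by
    by_contra hiΔ
    rw [hτ_inv i hiΔ] at hu'
    exact hu'.not_gt hw
  obtain ⟨⟨hmΔ, him⟩, hmin⟩ := isLeast_tauDelta_inv_apply hiΔ hlast hi0
  have hm : i + 1 < τ⁻¹ i := (hcov.ge_of_gt him).lt_of_ne fun he => hi1Δ (he ▸ hmΔ)
  have hconj := Equiv.swap_apply_apply τ⁻¹ i (i + 1)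
  rw [hτ_inv _ hi1Δ, inv_inv] at hconj
  have heq : Equiv.swap i (i + 1) * (τ * w * (sigma n)⁻¹) =
      τ * Equiv.swap (i + 1) (τ⁻¹ i) * w * (sigma n)⁻¹ := by
    rw [Equiv.swap_comm (i + 1), hconj]
    group
  rw [heq]
  refine isShPair_tauDelta_mul_swap hlast hdec hmΔ hm (fun z hz hzm => ?_)
    (fun z hz hzi => ?_) hu'
  · exact (not_lt.1 fun hiz => (hmin ⟨hz, hiz⟩).not_gt hzm).trans_lt hcov.lt
  · rcases (hcov.le_of_lt hzi).eq_or_lt with rfl | hzi'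
    · exact hw
    · exact hw.trans (hdec z hz i hiΔ hzi')

end Pairs

section Actions

variable {n : ℕ} {w u : Equiv.Perm (Fin (n + 1))}

theorem IsShPair.rightAction (h : IsShPair n w u) {j : Fin (n + 1)} (hj : j < Fin.last n) :
    IsShPair n
      (if len n w < len n (w * Equiv.swap j (j + 1)) then w * Equiv.swap j (j + 1) else w)
      (if lenStar n u < lenStar n (u * (sigma n * Equiv.swap j (j + 1) * (sigma n)⁻¹))
        then u * (sigma n * Equiv.swap j (j + 1) * (sigma n)⁻¹) else u) := by
  have hjj : j ≠ j + 1 := (Fin.lt_add_one_iff.2 hj).ne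
  refine Function.Involutive.ite_ite_of_both_of_snd (P := IsShPair n)
    (f := (· * Equiv.swap j (j + 1)))
    (g := (· * (sigma n * Equiv.swap j (j + 1) * (sigma n)⁻¹)))
    (fun u => by simp [mul_assoc]) (fun w hw => by simpa [mul_assoc] using lt_asymm hw)
    (fun u hu => ?_) (fun w u h hw => h.rightMul_both hj ((len_lt_mul_swap_iff hj w).1 hw))
    (fun w u h hw hu => h.rightMul_snd hj ?_ ((lenStar_lt_mul_conj_swap_iff hj u).1 hu)) h
  · rw [lenStar_lt_mul_conj_swap_iff hj] at hu ⊢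
    simpa using precOrd_of_not_precOrd (u.injective.ne ((sigma n).injective.ne hjj)) hu
  · exact (not_lt.1 (mt (len_lt_mul_swap_iff hj w).2 hw)).lt_of_ne (w.injective.ne hjj.symm)

theorem IsShPair.leftAction (h : IsShPair n w u) {i : Fin (n + 1)} (hi : (i : ℕ) + 1 < n) :
    IsShPair n
      (if len n w < len n (Equiv.swap i (i + 1) * w) then Equiv.swap i (i + 1) * w else w)
      (if lenStar n u < lenStar n (Equiv.swap i (i + 1) * u)
        then Equiv.swap i (i + 1) * u else u) := by
  have hi0 : i < Fin.last n := Fin.lt_def.2 (by simp; omega)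
  have hi1 : i + 1 < Fin.last n := by
    rw [Fin.lt_def, Fin.val_add_one_of_lt hi0]
    simpa using hi
  have hii : i ≠ i + 1 := (Fin.lt_add_one_iff.2 hi0).ne
  refine Function.Involutive.ite_ite_of_both_of_snd (P := IsShPair n)
    (f := (Equiv.swap i (i + 1) * ·)) (g := (Equiv.swap i (i + 1) * ·))
    (Equiv.swap_mul_self_mul _ _) (fun w hw => by simpa using lt_asymm hw)
    (fun u hu => ?_)
    (fun w u h hw => h.leftMul_both hi0 hi1 ((len_lt_swap_mul_iff hi0 w).1 hw))
    (fun w u h hw hu => h.leftMul_snd hi0 hi1 ?_ ((lenStar_lt_swap_mul_iff hi1 u).1 hu)) h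
  · rw [lenStar_lt_swap_mul_iff hi1] at hu ⊢
    simpa [mul_inv_rev] using precOrd_of_not_precOrd (u⁻¹.injective.ne hii) hu
  · exact (not_lt.1 (mt (len_lt_swap_mul_iff hi0 w).2 hw)).lt_of_ne
      (w⁻¹.injective.ne hii.symm)

end Actions

theorem statement19_general (n : ℕ) (w ustar : Equiv.Perm (Fin (n + 1)))
    (hpair : IsShPair n w ustar) :
    (∀ j : Fin (n + 1), j < Fin.last n →
      IsShPair n
        (if len n w < len n (w * Equiv.swap j (j + 1))
          then w * Equiv.swap j (j + 1) else w)
        (if lenStar n ustar <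
            lenStar n (ustar * (sigma n * Equiv.swap j (j + 1) * (sigma n)⁻¹))
          then ustar * (sigma n * Equiv.swap j (j + 1) * (sigma n)⁻¹) else ustar)) ∧
    (∀ i : Fin (n + 1), (i : ℕ) + 1 < n →
      IsShPair n
        (if len n w < len n (Equiv.swap i (i + 1) * w)
          then Equiv.swap i (i + 1) * w else w)
        (if lenStar n ustar < lenStar n (Equiv.swap i (i + 1) * ustar)
          then Equiv.swap i (i + 1) * ustar else ustar)) :=
  ⟨fun _ hj => hpair.rightAction hj, fun _ hi => hpair.leftAction hi⟩

/-- the set of Shareshian pairs is preserved by the restricted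
diagonal monoid action.  Right action by `s_j = (j, j+1)`, `j = 1, …, n-1`
(acting on the second coordinate by `t_j = σ s_j σ⁻¹`, with lengths measured by
`ℓ* = lenStar`), and left action by `s_i`, `i = 1, …, n-2`. -/
theorem statement19 (n : ℕ) (hn : 1 ≤ n) (w ustar : Equiv.Perm (Fin (n + 1)))
    (hpair : IsShPair n w ustar) :
    (∀ j : Fin (n + 1), j < Fin.last n →
      IsShPair n
        (if len n w < len n (w * Equiv.swap j (j + 1))
          then w * Equiv.swap j (j + 1) else w)
        (if lenStar n ustar <
            lenStar n (ustar * (sigma n * Equiv.swap j (j + 1) * (sigma n)⁻¹))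
          then ustar * (sigma n * Equiv.swap j (j + 1) * (sigma n)⁻¹) else ustar)) ∧
    (∀ i : Fin (n + 1), (i : ℕ) + 1 < n →
      IsShPair n
        (if len n w < len n (Equiv.swap i (i + 1) * w)
          then Equiv.swap i (i + 1) * w else w)
        (if lenStar n ustar < lenStar n (Equiv.swap i (i + 1) * ustar)
          then Equiv.swap i (i + 1) * ustar else ustar)) :=
  statement19_general n w ustar hpair

end ShareshianPairs
end
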